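/- Let k be even, J ∈ so(N) with exp(J/k) = -Id_N in SO(N) (so all rotation numbers a of J satisfy a ≡ k/2 mod k), and γ ∈ ℂ with kγ = α + βτ where α is odd and β is even. Then for R ∈ so(N,J): Z(γ,J;τ,N,o_N)(R) = i^{dim N/2}·(-1)^{(α+β-1)(dim N)/4}·Os(J/k,o_N)^{α+β}· Tr(e^R, W_{2,q}(N⊗ℂ)) / Tr(e^R, S_N). -/

import Mathlib

/- STATEMENT 15: let k be even, exp(J/k) = -Id_N (so the rotation numbers of J are
a_j = k/2 + kA_j), and kγ = α + βτ with α odd, β even. Then for R ∈ so(N,J)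
(acting by 2iπr_j, diagonal model):
Z(γ,J;τ,N,o_N)(R) = i^{dim N/2}·(-1)^{(α+β-1)(dim N)/4}·Os(J/k,o_N)^{α+β}
                     · Tr(e^R,W_{2,q}(N⊗ℂ)) / Tr(e^R,S_N),
where dim N = 2m, Os(J/k,o_N) = ν·(-1)^{Σ A_j},
Tr(e^R,W_{2,q}(N⊗ℂ)) = ∏_j ∏_{n≥1}(1-q^{n-1/2}e^{±2iπr_j})/∏_{n≥1}(1+q^{n}e^{±2iπr_j}),
and Tr(e^R,S_N) = ∏_j (e^{-iπr_j}+e^{iπr_j}). -/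

open Complex Real

noncomputable section

def qhex (τ : ℂ) : ℂ := Complex.exp ((π : ℂ) * I * τ)

def qex (τ : ℂ) : ℂ := Complex.exp (2 * (π : ℂ) * I * τ)

def phiNumF (τ z : ℂ) (n : ℕ) : ℂ :=
  (1 + qhex τ ^ (2 * n + 1) * Complex.exp (2 * (π : ℂ) * I * z)) *
    (1 + qhex τ ^ (2 * n + 1) * Complex.exp (-(2 * (π : ℂ) * I * z)))

def phiDenF (τ z : ℂ) (n : ℕ) : ℂ :=
  (1 - qex τ ^ (n + 1) * Complex.exp (2 * (π : ℂ) * I * z)) *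
    (1 - qex τ ^ (n + 1) * Complex.exp (-(2 * (π : ℂ) * I * z)))

def Phi1 (τ z : ℂ) : ℂ :=
  (Complex.exp (-((π : ℂ) * I * z)) - Complex.exp ((π : ℂ) * I * z))⁻¹ *
    ((∏' n : ℕ, phiNumF τ z n) / (∏' n : ℕ, phiDenF τ z n))

def Zstr {m : ℕ} (ν : ℂ) (a : Fin m → ℤ) (r : Fin m → ℂ) (γ : ℂ) : ℂ :=
  ν * ∏ j, (Complex.exp (-((π : ℂ) * I * ((a j : ℂ) * γ + r j))) -
      Complex.exp ((π : ℂ) * I * ((a j : ℂ) * γ + r j)))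

/-- Z(γ,J;τ,N,o_N)(R) in the diagonal model:
Tr(e^{γJ}e^R,W_{1,q}(N⊗ℂ)) / Str(e^{γJ}e^R,S_N,o_N), with the trace on W_{1,q}(N⊗ℂ)
computed from the eigenvalues e^{±2iπ(a_jγ+r_j)} of e^{γJ}e^R. -/
def Zdiag (τ : ℂ) {m : ℕ} (ν : ℂ) (a : Fin m → ℤ) (r : Fin m → ℂ) (γ : ℂ) : ℂ :=
  (∏ j, ∏' n : ℕ, phiNumF τ ((a j : ℂ) * γ + r j) n) /
    ((∏ j, ∏' n : ℕ, phiDenF τ ((a j : ℂ) * γ + r j) n) * Zstr ν a r γ)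

/-- Numerator factor of Tr(·,W_{2,q}): (1-q^{n-1/2}e^{2iπz})(1-q^{n-1/2}e^{-2iπz}). -/
def w2NumF (τ z : ℂ) (n : ℕ) : ℂ :=
  (1 - qhex τ ^ (2 * n + 1) * Complex.exp (2 * (π : ℂ) * I * z)) *
    (1 - qhex τ ^ (2 * n + 1) * Complex.exp (-(2 * (π : ℂ) * I * z)))

/-- Denominator factor of Tr(·,W_{2,q}): (1+q^{n}e^{2iπz})(1+q^{n}e^{-2iπz}). -/
def w2DenF (τ z : ℂ) (n : ℕ) : ℂ :=
  (1 + qex τ ^ (n + 1) * Complex.exp (2 * (π : ℂ) * I * z)) *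
    (1 + qex τ ^ (n + 1) * Complex.exp (-(2 * (π : ℂ) * I * z)))

/-!
Both sides factor over the rotation planes of `N`: `Z` is `ν⁻¹ ∏ⱼ Φ₁(aⱼγ + rⱼ)`. Expanding
`Φ₁` in q-Pochhammer symbols `(-c; q)_∞ = (1 + c)(-cq; q)_∞` shows that `Φ₁` is antiperiodic
under `z ↦ z + τ`; it is visibly antiperiodic under `z ↦ z + 1`, and the half-period shift
`z ↦ z + 1/2` turns it into `i · Tr(·, W₂) / Tr(·, S_N)`. Since `aⱼ = k (1/2 + Aⱼ)` and
`kγ = α + βτ` with `β` even, `aⱼγ ∈ 1/2 + ℤ + ℤτ`, so each factor is `±i` times the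
corresponding factor of the right-hand side; the signs combine to the stated power of `-1`,
and `ν⁻¹ = ν^(α+β)` because `α + β` is odd.
-/

lemma qex_eq_qhex_sq (τ : ℂ) : qex τ = qhex τ ^ 2 := by
  rw [qex, qhex, ← Complex.exp_nat_mul]; congr 1; push_cast; ring

lemma norm_qhex_sq_lt_one {τ : ℂ} (hτ : 0 < τ.im) : ‖qhex τ ^ 2‖ < 1 := by
  rw [← qex_eq_qhex_sq, qex, Complex.norm_exp, Real.exp_lt_one_iff]
  simpa [Complex.mul_re, Complex.mul_im] using mul_pos Real.two_pi_pos hτ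

lemma cexp_two_pi_I_mul (z : ℂ) : cexp (2 * π * I * z) = cexp (π * I * z) ^ 2 := by
  rw [← Complex.exp_nat_mul]; congr 1; push_cast; ring

lemma cexp_pi_I_mul_add_one (z : ℂ) : cexp (π * I * (z + 1)) = -cexp (π * I * z) := by
  rw [mul_add, mul_one, Complex.exp_add, Complex.exp_pi_mul_I, mul_neg_one]

lemma cexp_pi_I_mul_add_half (z : ℂ) : cexp (π * I * (z + 1 / 2)) = I * cexp (π * I * z) := by
  rw [mul_add, Complex.exp_add, show (π : ℂ) * I * (1 / 2) = π / 2 * I by ring,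
    Complex.exp_mul_I, Complex.cos_pi_div_two, Complex.sin_pi_div_two]
  ring

lemma cexp_pi_I_mul_add_tau (τ z : ℂ) : cexp (π * I * (z + τ)) = qhex τ * cexp (π * I * z) := by
  rw [qhex, mul_add, Complex.exp_add, mul_comm]

section

variable (τ z : ℂ) (n : ℕ)

lemma phiNumF_eq : phiNumF τ z n = (1 + qhex τ ^ (2 * n + 1) * cexp (π * I * z) ^ 2) *
    (1 + qhex τ ^ (2 * n + 1) * (cexp (π * I * z) ^ 2)⁻¹) := by
  rw [phiNumF, Complex.exp_neg, cexp_two_pi_I_mul]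

lemma phiDenF_eq : phiDenF τ z n = (1 - qex τ ^ (n + 1) * cexp (π * I * z) ^ 2) *
    (1 - qex τ ^ (n + 1) * (cexp (π * I * z) ^ 2)⁻¹) := by
  rw [phiDenF, Complex.exp_neg, cexp_two_pi_I_mul]

lemma w2NumF_eq : w2NumF τ z n = (1 - qhex τ ^ (2 * n + 1) * cexp (π * I * z) ^ 2) *
    (1 - qhex τ ^ (2 * n + 1) * (cexp (π * I * z) ^ 2)⁻¹) := by
  rw [w2NumF, Complex.exp_neg, cexp_two_pi_I_mul]

lemma w2DenF_eq : w2DenF τ z n = (1 + qex τ ^ (n + 1) * cexp (π * I * z) ^ 2) *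
    (1 + qex τ ^ (n + 1) * (cexp (π * I * z) ^ 2)⁻¹) := by
  rw [w2DenF, Complex.exp_neg, cexp_two_pi_I_mul]

end

lemma Phi1_eq_div (τ z : ℂ) : Phi1 τ z = (∏' n, phiNumF τ z n) /
    ((∏' n, phiDenF τ z n) * ((cexp (π * I * z))⁻¹ - cexp (π * I * z))) := by
  rw [Phi1, Complex.exp_neg, inv_mul_eq_div, div_div]

lemma Phi1_antiperiodic_one (τ : ℂ) : Function.Antiperiodic (Phi1 τ) 1 := by
  intro z
  have hnum (n : ℕ) : phiNumF τ (z + 1) n = phiNumF τ z n := by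
    rw [phiNumF_eq, phiNumF_eq, cexp_pi_I_mul_add_one, neg_sq]
  have hden (n : ℕ) : phiDenF τ (z + 1) n = phiDenF τ z n := by
    rw [phiDenF_eq, phiDenF_eq, cexp_pi_I_mul_add_one, neg_sq]
  rw [Phi1_eq_div, Phi1_eq_div, tprod_congr hnum, tprod_congr hden, cexp_pi_I_mul_add_one,
    inv_neg, neg_sub_neg, ← neg_sub, mul_neg, div_neg]

lemma Phi1_add_half (τ z : ℂ) : Phi1 τ (z + 1 / 2) = I * ((∏' n, w2NumF τ z n) /
    ((∏' n, w2DenF τ z n) * (cexp (-(π * I * z)) + cexp (π * I * z)))) := by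
  have hnum (n : ℕ) : phiNumF τ (z + 1 / 2) n = w2NumF τ z n := by
    rw [phiNumF_eq, w2NumF_eq, cexp_pi_I_mul_add_half, mul_pow, I_sq]; ring
  have hden (n : ℕ) : phiDenF τ (z + 1 / 2) n = w2DenF τ z n := by
    rw [phiDenF_eq, w2DenF_eq, cexp_pi_I_mul_add_half, mul_pow, I_sq]; ring
  have hsin : (I * cexp (π * I * z))⁻¹ - I * cexp (π * I * z) =
      -I * ((cexp (π * I * z))⁻¹ + cexp (π * I * z)) := by
    rw [mul_inv, inv_I]; ring
  rw [Phi1_eq_div, tprod_congr hnum, tprod_congr hden, cexp_pi_I_mul_add_half, hsin,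
    Complex.exp_neg]
  simp only [div_eq_mul_inv, mul_inv, neg_mul, inv_neg, inv_I]
  ring

/-- The q-Pochhammer symbol `(-c; q)_∞`. -/
def qProd (q c : ℂ) : ℂ := ∏' n : ℕ, (1 + c * q ^ n)

lemma multipliable_one_add_mul_pow {q : ℂ} (hq : ‖q‖ < 1) (c : ℂ) :
    Multipliable fun n : ℕ => 1 + c * q ^ n :=
  multipliable_one_add_of_summable (f := fun n : ℕ => c * q ^ n) <|
    ((summable_geometric_of_lt_one (norm_nonneg q) hq).mul_left ‖c‖).congr fun n => by
      rw [norm_mul, norm_pow]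

lemma qProd_eq_one_add_mul {q c d : ℂ} (hq : ‖q‖ < 1) (hcd : c * q = d) :
    qProd q c = (1 + c) * qProd q d := by
  have hshift : Multipliable fun n : ℕ => 1 + c * q ^ (n + 1) :=
    (multipliable_one_add_mul_pow hq (c * q)).congr fun n => by rw [pow_succ']; ring
  rw [qProd, tprod_eq_zero_mul' (f := fun n : ℕ => 1 + c * q ^ n) hshift, pow_zero, mul_one,
    qProd, ← hcd]
  congr 1
  exact tprod_congr fun n => by rw [pow_succ']; ring

lemma tprod_mul_eq_qProd_mul_qProd {q : ℂ} (hq : ‖q‖ < 1) (c d : ℂ) :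
    ∏' n : ℕ, (1 + c * q ^ n) * (1 + d * q ^ n) = qProd q c * qProd q d :=
  (multipliable_one_add_mul_pow hq c).tprod_mul (multipliable_one_add_mul_pow hq d)

lemma tprod_phiNumF {τ : ℂ} (hτ : 0 < τ.im) (z : ℂ) :
    ∏' n, phiNumF τ z n = qProd (qhex τ ^ 2) (qhex τ * cexp (π * I * z) ^ 2) *
      qProd (qhex τ ^ 2) (qhex τ * (cexp (π * I * z) ^ 2)⁻¹) := by
  rw [← tprod_mul_eq_qProd_mul_qProd (norm_qhex_sq_lt_one hτ)]
  exact tprod_congr fun n => by rw [phiNumF_eq]; ring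

lemma tprod_phiDenF {τ : ℂ} (hτ : 0 < τ.im) (z : ℂ) :
    ∏' n, phiDenF τ z n = qProd (qhex τ ^ 2) (-(qhex τ ^ 2 * cexp (π * I * z) ^ 2)) *
      qProd (qhex τ ^ 2) (-(qhex τ ^ 2 * (cexp (π * I * z) ^ 2)⁻¹)) := by
  rw [← tprod_mul_eq_qProd_mul_qProd (norm_qhex_sq_lt_one hτ)]
  exact tprod_congr fun n => by rw [phiDenF_eq, qex_eq_qhex_sq]; ring

lemma tprod_phiNumF_add_tau {τ : ℂ} (hτ : 0 < τ.im) (z : ℂ) :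
    ∏' n, phiNumF τ (z + τ) n = (qhex τ * cexp (π * I * z) ^ 2)⁻¹ * ∏' n, phiNumF τ z n := by
  have hq := norm_qhex_sq_lt_one hτ
  rw [tprod_phiNumF hτ, tprod_phiNumF hτ, cexp_pi_I_mul_add_tau]
  set h := qhex τ
  set x := cexp (π * I * z)
  have hh : h ≠ 0 := Complex.exp_ne_zero _
  have hx : x ≠ 0 := Complex.exp_ne_zero _
  rw [qProd_eq_one_add_mul hq (c := h * ((h * x) ^ 2)⁻¹) (d := h * (x ^ 2)⁻¹) (by field_simp),
    qProd_eq_one_add_mul hq (c := h * x ^ 2) (d := h * (h * x) ^ 2) (by ring)]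
  field_simp
  ring

lemma tprod_phiDenF_mul_add_tau {τ : ℂ} (hτ : 0 < τ.im) (z : ℂ) :
    (∏' n, phiDenF τ (z + τ) n) * ((cexp (π * I * (z + τ)))⁻¹ - cexp (π * I * (z + τ))) =
      -((qhex τ * cexp (π * I * z) ^ 2)⁻¹ *
        ((∏' n, phiDenF τ z n) * ((cexp (π * I * z))⁻¹ - cexp (π * I * z)))) := by
  have hq := norm_qhex_sq_lt_one hτ
  rw [tprod_phiDenF hτ, tprod_phiDenF hτ, cexp_pi_I_mul_add_tau]
  set h := qhex τ
  set x := cexp (π * I * z)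
  have hh : h ≠ 0 := Complex.exp_ne_zero _
  have hx : x ≠ 0 := Complex.exp_ne_zero _
  rw [qProd_eq_one_add_mul hq (c := -(h ^ 2 * ((h * x) ^ 2)⁻¹)) (d := -(h ^ 2 * (x ^ 2)⁻¹))
      (by field_simp),
    qProd_eq_one_add_mul hq (c := -(h ^ 2 * x ^ 2)) (d := -(h ^ 2 * (h * x) ^ 2)) (by ring)]
  field_simp
  ring

lemma Phi1_antiperiodic_tau {τ : ℂ} (hτ : 0 < τ.im) : Function.Antiperiodic (Phi1 τ) τ := by
  intro z
  have hc : (qhex τ * cexp (π * I * z) ^ 2)⁻¹ ≠ 0 := by simp [qhex, Complex.exp_ne_zero]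
  rw [Phi1_eq_div, Phi1_eq_div, tprod_phiNumF_add_tau hτ, tprod_phiDenF_mul_add_tau hτ, div_neg,
    mul_div_mul_left _ _ hc]

lemma Phi1_add_int_add_int_mul_tau {τ : ℂ} (hτ : 0 < τ.im) (z : ℂ) (t d : ℤ) :
    Phi1 τ (z + t + d * τ) = (-1 : ℂ) ^ (t + d) * Phi1 τ z := by
  have hone := (Phi1_antiperiodic_one τ).add_int_mul_eq (x := z) t
  rw [mul_one] at hone
  rw [(Phi1_antiperiodic_tau hτ).add_int_mul_eq, hone, Int.cast_negOnePow, Int.cast_negOnePow,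
    zpow_add₀ (by norm_num), mul_assoc, mul_left_comm]

lemma Zdiag_eq_inv_mul_prod_Phi1 (τ : ℂ) {m : ℕ} (ν : ℂ) (a : Fin m → ℤ) (r : Fin m → ℂ)
    (γ : ℂ) :
    Zdiag τ ν a r γ = ν⁻¹ * ∏ j, Phi1 τ (a j * γ + r j) := by
  simp only [Zdiag, Zstr, Phi1, Finset.prod_mul_distrib, Finset.prod_inv_distrib,
    div_eq_mul_inv, mul_inv]
  ring

lemma prod_neg_one_zpow {ι : Type*} (s : Finset ι) (f : ι → ℤ) :
    ∏ i ∈ s, (-1 : ℂ) ^ f i = (-1 : ℂ) ^ ∑ i ∈ s, f i := by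
  classical
  induction s using Finset.induction_on with
  | empty => simp
  | insert i s hi ih =>
    rw [Finset.prod_insert hi, Finset.sum_insert hi, ih, zpow_add₀ (by norm_num)]

lemma zpow_of_odd_eq_inv {ν : ℂ} (hν : ν = 1 ∨ ν = -1) {n : ℤ} (hn : Odd n) : ν ^ n = ν⁻¹ := by
  rcases hν with rfl | rfl
  · simp
  · rw [hn.neg_one_zpow]; norm_num

theorem Zdiag_special_case_W2_general (τ : ℂ) (hτ : 0 < τ.im) {m : ℕ} (ν : ℂ) (hν : ν = 1 ∨ ν = -1)
    (k e α β σ : ℤ) (hke : k = 2 * e) (hβ : Even β) (hσ : α + β - 1 = 2 * σ)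
    (γ : ℂ) (hkγ : (k : ℂ) * γ = (α : ℂ) + (β : ℂ) * τ)
    (A : Fin m → ℤ) (r : Fin m → ℂ)
    -- rotation numbers a_j = k/2 + kA_j of J:
    (a : Fin m → ℤ) (ha : ∀ j, a j = e + k * A j) :
    Zdiag τ ν a r γ =
      I ^ m * (-1 : ℂ) ^ (σ * (m : ℤ)) * (ν * (-1 : ℂ) ^ (∑ j, A j)) ^ (α + β) *
        ((∏ j, ∏' n : ℕ, w2NumF τ (r j) n) / (∏ j, ∏' n : ℕ, w2DenF τ (r j) n)) /
        (∏ j, (Complex.exp (-((π : ℂ) * I * r j)) + Complex.exp ((π : ℂ) * I * r j))) := by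
  obtain ⟨b, rfl⟩ := hβ
  subst hke
  have hz (j : Fin m) : (a j : ℂ) * γ + r j =
      r j + 1 / 2 + ((A j * α + σ - b : ℤ) : ℂ) + (((2 * A j + 1) * b : ℤ) : ℂ) * τ := by
    have hσ' : (α : ℂ) + (b + b) - 1 = 2 * σ := by exact_mod_cast hσ
    rw [ha j]
    push_cast at hkγ ⊢
    linear_combination (1 / 2 + (A j : ℂ)) * hkγ + 1 / 2 * hσ'
  have hPhi1 (j : Fin m) : Phi1 τ (a j * γ + r j) = (-1 : ℂ) ^ (A j * (α + (b + b)) + σ) *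
      (I * ((∏' n, w2NumF τ (r j) n) /
        ((∏' n, w2DenF τ (r j) n) * (cexp (-(π * I * r j)) + cexp (π * I * r j))))) := by
    rw [hz, Phi1_add_int_add_int_mul_tau hτ, Phi1_add_half]
    congr 2
    ring
  have hsum : ∑ j, (A j * (α + (b + b)) + σ) = (∑ j, A j) * (α + (b + b)) + σ * m := by
    rw [Finset.sum_add_distrib, ← Finset.sum_mul, Finset.sum_const, Finset.card_univ,
      Fintype.card_fin, nsmul_eq_mul]
    ring
  rw [Zdiag_eq_inv_mul_prod_Phi1, Finset.prod_congr rfl fun j _ => hPhi1 j,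
    Finset.prod_mul_distrib, prod_neg_one_zpow, hsum, Finset.prod_mul_distrib, Finset.prod_const,
    Finset.card_univ, Fintype.card_fin, Finset.prod_div_distrib, Finset.prod_mul_distrib,
    ← zpow_of_odd_eq_inv hν (n := α + (b + b)) ⟨σ, by omega⟩, mul_zpow, ← zpow_mul,
    zpow_add₀ (show (-1 : ℂ) ≠ 0 by norm_num)]
  simp only [div_eq_mul_inv, mul_inv]
  ring

theorem Zdiag_special_case_W2 (τ : ℂ) (hτ : 0 < τ.im) {m : ℕ} (ν : ℂ) (hν : ν = 1 ∨ ν = -1)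
    (k e α β σ : ℤ) (hke : k = 2 * e) (hα : Odd α) (hβ : Even β) (hσ : α + β - 1 = 2 * σ)
    (γ : ℂ) (hkγ : (k : ℂ) * γ = (α : ℂ) + (β : ℂ) * τ)
    (A : Fin m → ℤ) (r : Fin m → ℂ)
    -- rotation numbers a_j = k/2 + kA_j of J:
    (a : Fin m → ℤ) (ha : ∀ j, a j = e + k * A j)
    -- definedness hypotheses:
    (hpre : ∀ j, Complex.exp (-((π : ℂ) * I * ((a j : ℂ) * γ + r j))) -
      Complex.exp ((π : ℂ) * I * ((a j : ℂ) * γ + r j)) ≠ 0)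
    (hden : ∀ j n, phiDenF τ ((a j : ℂ) * γ + r j) n ≠ 0)
    (hnum : ∀ j n, phiNumF τ ((a j : ℂ) * γ + r j) n ≠ 0)
    (hden2 : ∀ j n, w2DenF τ (r j) n ≠ 0)
    (htrS : ∀ j, Complex.exp (-((π : ℂ) * I * r j)) + Complex.exp ((π : ℂ) * I * r j) ≠ 0) :
    Zdiag τ ν a r γ =
      I ^ m * (-1 : ℂ) ^ (σ * (m : ℤ)) * (ν * (-1 : ℂ) ^ (∑ j, A j)) ^ (α + β) *
        ((∏ j, ∏' n : ℕ, w2NumF τ (r j) n) / (∏ j, ∏' n : ℕ, w2DenF τ (r j) n)) /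
        (∏ j, (Complex.exp (-((π : ℂ) * I * r j)) + Complex.exp ((π : ℂ) * I * r j))) :=
  Zdiag_special_case_W2_general τ hτ ν hν k e α β σ hke hβ hσ γ hkγ A r a ha
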